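/- For every fixed x ∈ [0,1], the function φ(x,b) := ((b+x)/(4(2b+1)²))·( 4(b+1)⁴·log(b+1) − 4b⁴·log b − (2b+1)·( 3 + 6b + 6b² − 4(b+x)² ) ) − ((2b²+2b+1)/(2b+1))·(b+x)·log(b+x) converges to 1/3 − x + x² as b → ∞. -/

import Mathlib

open MeasureTheory Set Filter

/-- The function `φ(x,b) = (b+x)·Φ(b, b+x)`, where `Φ` is the sharp constant in the
weighted Poincaré inequality on `[b, b+1]`. -/
noncomputable def phi (x b : ℝ) : ℝ :=
  ((b + x) / (4 * (2 * b + 1) ^ 2)) *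
    (4 * (b + 1) ^ 4 * Real.log (b + 1) - 4 * b ^ 4 * Real.log b
      - (2 * b + 1) * (3 + 6 * b + 6 * b ^ 2 - 4 * (b + x) ^ 2))
  - ((2 * b ^ 2 + 2 * b + 1) / (2 * b + 1)) * (b + x) * Real.log (b + x)

open Real Finset Topology

/-! Writing `log (b + 1) = log b + log (1 + 1/b)` and `log (b + x) = log b + log (1 + x/b)`, the
`log b` terms of `φ` cancel exactly, since `(b + 1)⁴ - b⁴ = (2b + 1)(2b² + 2b + 1)`. Replacing
`log (1 + 1/b)` and `log (1 + x/b)` by their Taylor polynomials of degree 4 and 2 leaves a rational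
function of `u = 1/b` that is continuous at `u = 0` with value `1/3 - x + x²`; the two Taylor
remainders are `O(b⁻⁵)` and `O(b⁻³)` and are multiplied by coefficients of size `O(b⁴)` and
`O(b²)`. -/

noncomputable def logTaylorRem (n : ℕ) (y : ℝ) : ℝ :=
  log (1 + y) + ∑ i ∈ range n, (-y) ^ (i + 1) / (i + 1)

lemma abs_logTaylorRem_le {y : ℝ} (hy : |y| ≤ 1 / 2) (n : ℕ) :
    |logTaylorRem n y| ≤ 2 * |y| ^ (n + 1) := by
  have hrem := abs_log_sub_add_sum_range_le (x := -y) (by rw [abs_neg]; linarith) n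
  rw [sub_neg_eq_add, abs_neg, add_comm] at hrem
  calc |logTaylorRem n y| ≤ |y| ^ (n + 1) / (1 - |y|) := hrem
    _ ≤ |y| ^ (n + 1) / (1 / 2) := by gcongr; linarith
    _ = 2 * |y| ^ (n + 1) := by ring

lemma tendsto_pow_mul_logTaylorRem_div (c : ℝ) (n : ℕ) :
    Tendsto (fun b : ℝ => b ^ n * logTaylorRem n (c / b)) atTop (𝓝 0) := by
  refine squeeze_zero_norm' ?_ ((tendsto_const_nhds (x := 2 * |c| ^ (n + 1))).div_atTop tendsto_id)
  filter_upwards [eventually_gt_atTop 0, eventually_ge_atTop (2 * |c|)] with b hb hcb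
  have hy : |c / b| ≤ 1 / 2 := by
    rw [abs_div, abs_of_pos hb, div_le_iff₀ hb]; linarith
  calc ‖b ^ n * logTaylorRem n (c / b)‖ = b ^ n * |logTaylorRem n (c / b)| := by
        rw [norm_mul, norm_pow, Real.norm_of_nonneg hb.le, Real.norm_eq_abs]
    _ ≤ b ^ n * (2 * |c / b| ^ (n + 1)) := by gcongr; exact abs_logTaylorRem_le hy n
    _ = 2 * |c| ^ (n + 1) / id b := by
        rw [abs_div, abs_of_pos hb, id, div_pow]; field_simp; ring

/-- `φ(x, 1/u)` with `log (1 + u)` and `log (1 + x u)` replaced by their Taylor polynomials of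
degree 4 and 2. -/
noncomputable def phiMain (x u : ℝ) : ℝ :=
  (512 - 1536 * x + 1536 * x ^ 2 + u * (768 - 1792 * x + 768 * x ^ 2 + 1536 * x ^ 3)
      + u ^ 2 * (256 - 384 * x - 768 * x ^ 2 + 2304 * x ^ 3)
      + u ^ 3 * (-256 + 64 * x - 576 * x ^ 2 + 1536 * x ^ 3)
      + u ^ 4 * (-384 - 256 * x - 96 * x ^ 2 + 576 * x ^ 3)
      + u ^ 5 * (-224 - 384 * x + 96 * x ^ 3)
      + u ^ 6 * (-48 - 224 * x) + u ^ 7 * (-48 * x)) / (192 * (2 + u) ^ 3)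

lemma phi_eq_phiMain_add_logTaylorRem {x b : ℝ} (hb : 0 < b) (hbx : 0 < b + x) :
    phi x b = phiMain x b⁻¹
      + b⁻¹ * (1 + x * b⁻¹) * (1 + b⁻¹) ^ 4 / (2 + b⁻¹) ^ 2 * (b ^ 4 * logTaylorRem 4 (1 / b))
      - (2 + 2 * b⁻¹ + b⁻¹ ^ 2) * (1 + x * b⁻¹) / (2 + b⁻¹) * (b ^ 2 * logTaylorRem 2 (x / b)) := by
  have hlog1 : log (b + 1) = log b + log (1 + 1 / b) := by
    rw [← log_mul hb.ne' (by positivity)]; congr 1; field_simp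
  have hlogx : log (b + x) = log b + log (1 + x / b) := by
    rw [← log_mul hb.ne' (by rw [one_add_div hb.ne']; positivity)]; congr 1; field_simp
  simp only [phi, phiMain, logTaylorRem, hlog1, hlogx, sum_range_succ, sum_range_zero]
  push_cast
  have : (2 : ℝ) + b⁻¹ ≠ 0 := by positivity
  field_simp
  ring

theorem phi_tendsto_atTop (x : ℝ) :
    Tendsto (fun b : ℝ => phi x b) atTop (nhds (1 / 3 - x + x ^ 2)) := by
  have hu : Tendsto (fun b : ℝ => b⁻¹) atTop (𝓝 0) := tendsto_inv_atTop_zero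
  have hmain : Tendsto (fun b => phiMain x b⁻¹) atTop (𝓝 (1 / 3 - x + x ^ 2)) := by
    have hcont : ContinuousAt (phiMain x) 0 := by
      unfold phiMain; exact ContinuousAt.div (by fun_prop) (by fun_prop) (by norm_num)
    have hval : phiMain x 0 = 1 / 3 - x + x ^ 2 := by norm_num [phiMain]; ring
    exact hval ▸ hcont.tendsto.comp hu
  have hA : Tendsto (fun b : ℝ => b⁻¹ * (1 + x * b⁻¹) * (1 + b⁻¹) ^ 4 / (2 + b⁻¹) ^ 2)
      atTop (𝓝 0) := by
    have hcont : ContinuousAt (fun u : ℝ => u * (1 + x * u) * (1 + u) ^ 4 / (2 + u) ^ 2) 0 :=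
      ContinuousAt.div (by fun_prop) (by fun_prop) (by norm_num)
    simpa [Function.comp_def] using hcont.tendsto.comp hu
  have hC : Tendsto (fun b : ℝ => (2 + 2 * b⁻¹ + b⁻¹ ^ 2) * (1 + x * b⁻¹) / (2 + b⁻¹))
      atTop (𝓝 1) := by
    have hcont : ContinuousAt (fun u : ℝ => (2 + 2 * u + u ^ 2) * (1 + x * u) / (2 + u)) 0 :=
      ContinuousAt.div (by fun_prop) (by fun_prop) (by norm_num)
    simpa [Function.comp_def] using hcont.tendsto.comp hu
  have hlim := (hmain.add (hA.mul (tendsto_pow_mul_logTaylorRem_div 1 4))).sub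
    (hC.mul (tendsto_pow_mul_logTaylorRem_div x 2))
  rw [mul_zero, mul_zero, add_zero, sub_zero] at hlim
  refine hlim.congr' ?_
  filter_upwards [eventually_gt_atTop 0, eventually_gt_atTop (-x)] with b hb hbx
  exact (phi_eq_phiMain_add_logTaylorRem hb (by linarith)).symm
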